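/- arXiv:math/0511609 — 5 statements merged into one kernel-verified Lean document; each statement's English description precedes it below -/
import Mathlib

section
/- Let (𝓜, ⊗, 1) be a monoidal category and 𝓩 a small category. Let G : 𝓩 → 𝓜 be a functor equipped with natural transformations Δ : G ⟶ G⊗G and ε : G ⟶ const_1, where (G⊗G)(Z) = G(Z)⊗G(Z) on objects and (G⊗G)(f) = G(f)⊗G(f) on morphisms, and const_1 is the constant functor at the unit object, such that for every object Z the triple (G(Z), Δ_Z, ε_Z) is a comonoid object in 𝓜 (Δ_Z coassociative up to the associator, ε_Z a counit up to the unitors). If a colimit cocone (C, c) of G exists in 𝓜, then there exist unique morphisms Δ_C : C → C⊗C and ε_C : C → 1 such that c_Z ≫ Δ_C = Δ_Z ≫ (c_Z ⊗ c_Z) and c_Z ≫ ε_C = ε_Z for every object Z of 𝓩, and moreover (C, Δ_C, ε_C) is a comonoid object in 𝓜. -/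
/-!
The legs `c_z` of a colimit cocone are jointly epimorphic, so each comonoid axiom for `C` may be
checked after precomposing with every `c_z`. A morphism `f : X ⟶ C` intertwining the
comultiplications and counits carries each axiom of `X` to the corresponding axiom of `C` so
precomposed, by pushing it forward along `f ⊗ f ⊗ f` (resp. `f`).
-/

open CategoryTheory CategoryTheory.Limits CategoryTheory.MonoidalCategory

section Transfer

variable {M : Type*} [Category M] [MonoidalCategory M] {X C : M}

theorem coassoc_comp_of_comp_comul {Δ : X ⟶ X ⊗ X} {ΔC : C ⟶ C ⊗ C} (f : X ⟶ C)
    (hf : f ≫ ΔC = Δ ≫ (f ⊗ₘ f))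
    (hcoassoc : Δ ≫ (Δ ⊗ₘ 𝟙 X) ≫ (α_ X X X).hom = Δ ≫ (𝟙 X ⊗ₘ Δ)) :
    f ≫ ΔC ≫ (ΔC ⊗ₘ 𝟙 C) ≫ (α_ C C C).hom = f ≫ ΔC ≫ (𝟙 C ⊗ₘ ΔC) := by
  have hleft : (f ⊗ₘ f) ≫ (ΔC ⊗ₘ 𝟙 C) = (Δ ⊗ₘ 𝟙 X) ≫ ((f ⊗ₘ f) ⊗ₘ f) := by
    simp only [tensorHom_comp_tensorHom, hf, Category.comp_id, Category.id_comp]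
  have hright : (f ⊗ₘ f) ≫ (𝟙 C ⊗ₘ ΔC) = (𝟙 X ⊗ₘ Δ) ≫ (f ⊗ₘ (f ⊗ₘ f)) := by
    simp only [tensorHom_comp_tensorHom, hf, Category.comp_id, Category.id_comp]
  calc f ≫ ΔC ≫ (ΔC ⊗ₘ 𝟙 C) ≫ (α_ C C C).hom
      = Δ ≫ (Δ ⊗ₘ 𝟙 X) ≫ (α_ X X X).hom ≫ (f ⊗ₘ (f ⊗ₘ f)) := by
        rw [reassoc_of% hf, reassoc_of% hleft, associator_naturality]
    _ = f ≫ ΔC ≫ (𝟙 C ⊗ₘ ΔC) := by rw [reassoc_of% hcoassoc, ← hright, reassoc_of% hf]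

theorem counit_left_comp_of_comp_comul {Δ : X ⟶ X ⊗ X} {ε : X ⟶ 𝟙_ M} {ΔC : C ⟶ C ⊗ C}
    {εC : C ⟶ 𝟙_ M} (f : X ⟶ C) (hfΔ : f ≫ ΔC = Δ ≫ (f ⊗ₘ f)) (hfε : f ≫ εC = ε)
    (hcounit : Δ ≫ (ε ⊗ₘ 𝟙 X) = (λ_ X).inv) :
    f ≫ ΔC ≫ (εC ⊗ₘ 𝟙 C) = f ≫ (λ_ C).inv := by
  have hsplit : (f ⊗ₘ f) ≫ (εC ⊗ₘ 𝟙 C) = (ε ⊗ₘ 𝟙 X) ≫ (𝟙 (𝟙_ M) ⊗ₘ f) := by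
    simp only [tensorHom_comp_tensorHom, hfε, Category.comp_id, Category.id_comp]
  rw [reassoc_of% hfΔ, hsplit, reassoc_of% hcounit, id_tensorHom, leftUnitor_inv_naturality]

theorem counit_right_comp_of_comp_comul {Δ : X ⟶ X ⊗ X} {ε : X ⟶ 𝟙_ M} {ΔC : C ⟶ C ⊗ C}
    {εC : C ⟶ 𝟙_ M} (f : X ⟶ C) (hfΔ : f ≫ ΔC = Δ ≫ (f ⊗ₘ f)) (hfε : f ≫ εC = ε)
    (hcounit : Δ ≫ (𝟙 X ⊗ₘ ε) = (ρ_ X).inv) :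
    f ≫ ΔC ≫ (𝟙 C ⊗ₘ εC) = f ≫ (ρ_ C).inv := by
  have hsplit : (f ⊗ₘ f) ≫ (𝟙 C ⊗ₘ εC) = (𝟙 X ⊗ₘ ε) ≫ (f ⊗ₘ 𝟙 (𝟙_ M)) := by
    simp only [tensorHom_comp_tensorHom, hfε, Category.comp_id, Category.id_comp]
  rw [reassoc_of% hfΔ, hsplit, reassoc_of% hcounit, tensorHom_id, rightUnitor_inv_naturality]

end Transfer

section Cocones

variable {Z : Type*} [Category Z] {M : Type*} [Category M] [MonoidalCategory M] {G : Z ⥤ M}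

def comulCocone (c : Cocone G) (Δ : ∀ z : Z, G.obj z ⟶ G.obj z ⊗ G.obj z)
    (hΔnat : ∀ {z z' : Z} (f : z ⟶ z'), G.map f ≫ Δ z' = Δ z ≫ (G.map f ⊗ₘ G.map f)) :
    Cocone G where
  pt := c.pt ⊗ c.pt
  ι.app z := Δ z ≫ (c.ι.app z ⊗ₘ c.ι.app z)
  ι.naturality z z' f := by
    dsimp
    rw [Category.comp_id, reassoc_of% hΔnat f, tensorHom_comp_tensorHom, c.w f]

def counitCocone (ε : ∀ z : Z, G.obj z ⟶ 𝟙_ M)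
    (hεnat : ∀ {z z' : Z} (f : z ⟶ z'), G.map f ≫ ε z' = ε z) : Cocone G where
  pt := 𝟙_ M
  ι.app := ε
  ι.naturality z z' f := by simpa using hεnat f

end Cocones

/-- A `𝒵`-coalgebra in a monoidal category `𝓜` (a functor `G` equipped with
natural transformations `Δ : G ⟶ G ⊗ G` and `ε : G ⟶ const 𝟙_𝓜` which are objectwise a
comonoid structure) induces, on any colimit `C` of `G`, a unique pair of morphisms
`Δ_C, ε_C` compatible with the colimit cocone, and these make `C` a comonoid object. -/
theorem colimit_of_coalgebra_functor_is_comonoid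
    {Z : Type*} [SmallCategory Z] {M : Type*} [Category M] [MonoidalCategory M]
    (G : Z ⥤ M)
    (Δ : ∀ z : Z, G.obj z ⟶ G.obj z ⊗ G.obj z)
    (ε : ∀ z : Z, G.obj z ⟶ 𝟙_ M)
    (hΔnat : ∀ {z z' : Z} (f : z ⟶ z'), G.map f ≫ Δ z' = Δ z ≫ (G.map f ⊗ₘ G.map f))
    (hεnat : ∀ {z z' : Z} (f : z ⟶ z'), G.map f ≫ ε z' = ε z)
    (hcoassoc : ∀ z : Z,
      Δ z ≫ (Δ z ⊗ₘ 𝟙 (G.obj z)) ≫ (α_ (G.obj z) (G.obj z) (G.obj z)).hom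
        = Δ z ≫ (𝟙 (G.obj z) ⊗ₘ Δ z))
    (hcounit_left : ∀ z : Z, Δ z ≫ (ε z ⊗ₘ 𝟙 (G.obj z)) = (λ_ (G.obj z)).inv)
    (hcounit_right : ∀ z : Z, Δ z ≫ (𝟙 (G.obj z) ⊗ₘ ε z) = (ρ_ (G.obj z)).inv)
    (c : Cocone G) (hc : IsColimit c) :
    ∃ (ΔC : c.pt ⟶ c.pt ⊗ c.pt) (εC : c.pt ⟶ 𝟙_ M),
      (∀ z : Z, c.ι.app z ≫ ΔC = Δ z ≫ (c.ι.app z ⊗ₘ c.ι.app z)) ∧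
      (∀ z : Z, c.ι.app z ≫ εC = ε z) ∧
      (∀ (ΔC' : c.pt ⟶ c.pt ⊗ c.pt) (εC' : c.pt ⟶ 𝟙_ M),
        (∀ z : Z, c.ι.app z ≫ ΔC' = Δ z ≫ (c.ι.app z ⊗ₘ c.ι.app z)) →
        (∀ z : Z, c.ι.app z ≫ εC' = ε z) → ΔC' = ΔC ∧ εC' = εC) ∧
      (ΔC ≫ (ΔC ⊗ₘ 𝟙 c.pt) ≫ (α_ c.pt c.pt c.pt).hom = ΔC ≫ (𝟙 c.pt ⊗ₘ ΔC)) ∧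
      (ΔC ≫ (εC ⊗ₘ 𝟙 c.pt) = (λ_ c.pt).inv) ∧
      (ΔC ≫ (𝟙 c.pt ⊗ₘ εC) = (ρ_ c.pt).inv) := by
  let sΔ := comulCocone c Δ hΔnat
  let sε := counitCocone ε hεnat
  have hΔC (z : Z) : c.ι.app z ≫ hc.desc sΔ = Δ z ≫ (c.ι.app z ⊗ₘ c.ι.app z) := hc.fac sΔ z
  have hεC (z : Z) : c.ι.app z ≫ hc.desc sε = ε z := hc.fac sε z
  refine ⟨hc.desc sΔ, hc.desc sε, hΔC, hεC,
    fun ΔC' εC' hΔC' hεC' => ⟨hc.uniq sΔ ΔC' hΔC', hc.uniq sε εC' hεC'⟩, ?_, ?_, ?_⟩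
  · exact hc.hom_ext fun z => coassoc_comp_of_comp_comul _ (hΔC z) (hcoassoc z)
  · exact hc.hom_ext fun z =>
      counit_left_comp_of_comp_comul _ (hΔC z) (hεC z) (hcounit_left z)
  · exact hc.hom_ext fun z =>
      counit_right_comp_of_comp_comul _ (hΔC z) (hεC z) (hcounit_right z)
end

section
/- Let (𝓜, ⊗, 1) be a monoidal category, 𝓩 a small category, and G : 𝓩 → 𝓜 a functor with natural transformations Δ : G ⟶ G⊗G and ε : G ⟶ const_1 making each (G(Z), Δ_Z, ε_Z) a comonoid object. Suppose the colimit cocone (C, c) of G exists, and let (C, Δ_C, ε_C) be the induced comonoid with c_Z ≫ Δ_C = Δ_Z ≫ (c_Z ⊗ c_Z) and c_Z ≫ ε_C = ε_Z. Let H : 𝓩 → 𝓜 be a functor with a natural transformation ρ : H ⟶ H⊗G such that for each Z, ρ_Z is a coassociative counital right coaction of the comonoid G(Z) on H(Z). If the colimit cocone (M, m) of H exists, then there exists a unique morphism ρ_M : M → M⊗C with m_Z ≫ ρ_M = ρ_Z ≫ (m_Z ⊗ c_Z) for all Z, and ρ_M makes M a right C-comodule, i.e. ρ_M ≫ (ρ_M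 ⊗ id_C) ≫ α = ρ_M ≫ (id_M ⊗ Δ_C) and ρ_M ≫ (id_M ⊗ ε_C) equals the right unit constraint of M. -/
open CategoryTheory CategoryTheory.Limits CategoryTheory.MonoidalCategory

/-!
Each colimit injection `m_Z` intertwines the coaction `ρ_Z` of `G(Z)` with the coaction `ρ_M` of
`C` along the comonoid morphism `c_Z`. Such intertwiners transport the coassociativity and
counit equations from `H(Z)` to `M` after precomposition with `m_Z`, and the injections are
jointly epimorphic.
-/

namespace CategoryTheory.MonoidalCategory

variable {𝓒 : Type*} [Category 𝓒] [MonoidalCategory 𝓒]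
  {A B X Y : 𝓒} {ρA : A ⟶ A ⊗ X} {ρB : B ⟶ B ⊗ Y} {f : A ⟶ B} {g : X ⟶ Y}

lemma comp_coaction_tensorHom_id_comp_associator (h : f ≫ ρB = ρA ≫ (f ⊗ₘ g)) :
    f ≫ ρB ≫ (ρB ⊗ₘ 𝟙 Y) ≫ (α_ B Y Y).hom
      = ρA ≫ (ρA ⊗ₘ 𝟙 X) ≫ (α_ A X X).hom ≫ (f ⊗ₘ (g ⊗ₘ g)) := by
  have h' : (f ⊗ₘ g) ≫ (ρB ⊗ₘ 𝟙 Y) = (ρA ⊗ₘ 𝟙 X) ≫ ((f ⊗ₘ g) ⊗ₘ g) := by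
    rw [tensorHom_comp_tensorHom, tensorHom_comp_tensorHom, h]
    simp only [Category.comp_id, Category.id_comp]
  rw [reassoc_of% h, reassoc_of% h', associator_naturality]

lemma comp_coaction_id_tensorHom {V W : 𝓒} {kX : X ⟶ V} {kY : Y ⟶ W} {l : V ⟶ W}
    (h : f ≫ ρB = ρA ≫ (f ⊗ₘ g)) (hk : g ≫ kY = kX ≫ l) :
    f ≫ ρB ≫ (𝟙 B ⊗ₘ kY) = ρA ≫ (𝟙 A ⊗ₘ kX) ≫ (f ⊗ₘ l) := by
  rw [reassoc_of% h, tensorHom_comp_tensorHom, tensorHom_comp_tensorHom, hk]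
  simp only [Category.comp_id, Category.id_comp]

end CategoryTheory.MonoidalCategory

section

variable {Z : Type*} [Category Z] {M : Type*} [Category M] [MonoidalCategory M]
  {G H : Z ⥤ M}

def coactionCocone (m : Cocone H) (c : Cocone G)
    (ρc : ∀ z : Z, H.obj z ⟶ H.obj z ⊗ G.obj z)
    (hρnat : ∀ {z z' : Z} (f : z ⟶ z'), H.map f ≫ ρc z' = ρc z ≫ (H.map f ⊗ₘ G.map f)) :
    Cocone H where
  pt := m.pt ⊗ c.pt
  ι.app z := ρc z ≫ (m.ι.app z ⊗ₘ c.ι.app z)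
  ι.naturality z z' f := by
    simp only [Functor.const_obj_obj, Functor.const_obj_map, Category.comp_id]
    rw [reassoc_of% hρnat f, tensorHom_comp_tensorHom, m.w f, c.w f]

end

theorem colimit_of_comodule_functor_is_comodule_general
    {Z : Type*} [SmallCategory Z] {M : Type*} [Category M] [MonoidalCategory M]
    (G : Z ⥤ M)
    (Δ : ∀ z : Z, G.obj z ⟶ G.obj z ⊗ G.obj z)
    (ε : ∀ z : Z, G.obj z ⟶ 𝟙_ M)
    (c : Cocone G)
    (ΔC : c.pt ⟶ c.pt ⊗ c.pt) (εC : c.pt ⟶ 𝟙_ M)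
    (hΔC : ∀ z : Z, c.ι.app z ≫ ΔC = Δ z ≫ (c.ι.app z ⊗ₘ c.ι.app z))
    (hεC : ∀ z : Z, c.ι.app z ≫ εC = ε z)
    (H : Z ⥤ M)
    (ρc : ∀ z : Z, H.obj z ⟶ H.obj z ⊗ G.obj z)
    (hρnat : ∀ {z z' : Z} (f : z ⟶ z'), H.map f ≫ ρc z' = ρc z ≫ (H.map f ⊗ₘ G.map f))
    (hρcoassoc : ∀ z : Z,
      ρc z ≫ (ρc z ⊗ₘ 𝟙 (G.obj z)) ≫ (α_ (H.obj z) (G.obj z) (G.obj z)).hom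
        = ρc z ≫ (𝟙 (H.obj z) ⊗ₘ Δ z))
    (hρcounit : ∀ z : Z, ρc z ≫ (𝟙 (H.obj z) ⊗ₘ ε z) = (ρ_ (H.obj z)).inv)
    (m : Cocone H) (hm : IsColimit m) :
    ∃ ρM : m.pt ⟶ m.pt ⊗ c.pt,
      (∀ z : Z, m.ι.app z ≫ ρM = ρc z ≫ (m.ι.app z ⊗ₘ c.ι.app z)) ∧
      (∀ ρM' : m.pt ⟶ m.pt ⊗ c.pt,
        (∀ z : Z, m.ι.app z ≫ ρM' = ρc z ≫ (m.ι.app z ⊗ₘ c.ι.app z)) → ρM' = ρM) ∧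
      (ρM ≫ (ρM ⊗ₘ 𝟙 c.pt) ≫ (α_ m.pt c.pt c.pt).hom = ρM ≫ (𝟙 m.pt ⊗ₘ ΔC)) ∧
      (ρM ≫ (𝟙 m.pt ⊗ₘ εC) = (ρ_ m.pt).inv) := by
  let ρM : m.pt ⟶ m.pt ⊗ c.pt := hm.desc (coactionCocone m c ρc hρnat)
  have hι (z : Z) : m.ι.app z ≫ ρM = ρc z ≫ (m.ι.app z ⊗ₘ c.ι.app z) := hm.fac _ z
  refine ⟨ρM, hι, fun ρM' h => hm.hom_ext fun z => (h z).trans (hι z).symm, ?_, ?_⟩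
  · refine hm.hom_ext fun z => ?_
    rw [comp_coaction_tensorHom_id_comp_associator (B := m.pt) (hι z), reassoc_of% (hρcoassoc z),
      comp_coaction_id_tensorHom (B := m.pt) (hι z) (hΔC z)]
  · refine hm.hom_ext fun z => ?_
    have hε : c.ι.app z ≫ εC = ε z ≫ 𝟙 (𝟙_ M) := by rw [hεC, Category.comp_id]
    rw [comp_coaction_id_tensorHom (B := m.pt) (hι z) hε, reassoc_of% (hρcounit z),
      tensorHom_id, rightUnitor_inv_naturality]

/-- Let `G : 𝒵 ⥤ 𝓜` be a `𝒵`-coalgebra in a monoidal category with colimit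
comonoid `(C, Δ_C, ε_C)`, and `H : 𝒵 ⥤ 𝓜` a functor equipped with a natural transformation
`ρ : H ⟶ H ⊗ G` which is objectwise a coassociative counital right coaction. If the colimit
cocone `(M, m)` of `H` exists, then there is a unique morphism `ρ_M : M ⟶ M ⊗ C` with
`m_Z ≫ ρ_M = ρ_Z ≫ (m_Z ⊗ c_Z)` for all `Z`, and `ρ_M` makes `M` a right `C`-comodule. -/
theorem colimit_of_comodule_functor_is_comodule
    {Z : Type*} [SmallCategory Z] {M : Type*} [Category M] [MonoidalCategory M]
    (G : Z ⥤ M)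
    (Δ : ∀ z : Z, G.obj z ⟶ G.obj z ⊗ G.obj z)
    (ε : ∀ z : Z, G.obj z ⟶ 𝟙_ M)
    (hΔnat : ∀ {z z' : Z} (f : z ⟶ z'), G.map f ≫ Δ z' = Δ z ≫ (G.map f ⊗ₘ G.map f))
    (hεnat : ∀ {z z' : Z} (f : z ⟶ z'), G.map f ≫ ε z' = ε z)
    (hcoassoc : ∀ z : Z,
      Δ z ≫ (Δ z ⊗ₘ 𝟙 (G.obj z)) ≫ (α_ (G.obj z) (G.obj z) (G.obj z)).hom
        = Δ z ≫ (𝟙 (G.obj z) ⊗ₘ Δ z))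
    (hcounit_left : ∀ z : Z, Δ z ≫ (ε z ⊗ₘ 𝟙 (G.obj z)) = (λ_ (G.obj z)).inv)
    (hcounit_right : ∀ z : Z, Δ z ≫ (𝟙 (G.obj z) ⊗ₘ ε z) = (ρ_ (G.obj z)).inv)
    (c : Cocone G) (hc : IsColimit c)
    (ΔC : c.pt ⟶ c.pt ⊗ c.pt) (εC : c.pt ⟶ 𝟙_ M)
    (hΔC : ∀ z : Z, c.ι.app z ≫ ΔC = Δ z ≫ (c.ι.app z ⊗ₘ c.ι.app z))
    (hεC : ∀ z : Z, c.ι.app z ≫ εC = ε z)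
    (H : Z ⥤ M)
    (ρc : ∀ z : Z, H.obj z ⟶ H.obj z ⊗ G.obj z)
    (hρnat : ∀ {z z' : Z} (f : z ⟶ z'), H.map f ≫ ρc z' = ρc z ≫ (H.map f ⊗ₘ G.map f))
    (hρcoassoc : ∀ z : Z,
      ρc z ≫ (ρc z ⊗ₘ 𝟙 (G.obj z)) ≫ (α_ (H.obj z) (G.obj z) (G.obj z)).hom
        = ρc z ≫ (𝟙 (H.obj z) ⊗ₘ Δ z))
    (hρcounit : ∀ z : Z, ρc z ≫ (𝟙 (H.obj z) ⊗ₘ ε z) = (ρ_ (H.obj z)).inv)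
    (m : Cocone H) (hm : IsColimit m) :
    ∃ ρM : m.pt ⟶ m.pt ⊗ c.pt,
      (∀ z : Z, m.ι.app z ≫ ρM = ρc z ≫ (m.ι.app z ⊗ₘ c.ι.app z)) ∧
      (∀ ρM' : m.pt ⟶ m.pt ⊗ c.pt,
        (∀ z : Z, m.ι.app z ≫ ρM' = ρc z ≫ (m.ι.app z ⊗ₘ c.ι.app z)) → ρM' = ρM) ∧
      (ρM ≫ (ρM ⊗ₘ 𝟙 c.pt) ≫ (α_ m.pt c.pt c.pt).hom = ρM ≫ (𝟙 m.pt ⊗ₘ ΔC)) ∧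
      (ρM ≫ (𝟙 m.pt ⊗ₘ εC) = (ρ_ m.pt).inv) :=
  colimit_of_comodule_functor_is_comodule_general G Δ ε c ΔC εC hΔC hεC H ρc hρnat hρcoassoc
    hρcounit m hm
end

section
/- Let (I, ≤) be a directed partially ordered set, 𝓐 a category, and (M_i, μ_{ji}, ν_{ij}) a split direct system in 𝓐 over I. Suppose the colimit cocone (M, μ) of the underlying direct system (M_i, μ_{ji}) exists, so μ_i : M_i → M satisfy μ_i = μ_{ji} ≫ μ_j for i ≤ j. Then there exist unique morphisms ν_i : M → M_i (i ∈ I) in 𝓐 such that ν_i ∘ μ_i = id_{M_i} and ν_i = ν_{ij} ∘ ν_j for all i ≤ j in I. -/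
/-!
For `i, j` choose an upper bound `k` and let the transfer map be
`τ i j := μ_{jk} ≫ ν_{ik} : M_j ⟶ M_i`; the split relations `μ_{kl} ≫ ν_{il} = ν_{ik}` show
that this does not depend on `k`. The maps `τ i _` form a cocone over the direct system with
vertex `M_i`, and `ν_i` is the induced map out of the colimit. Since `τ i i = 𝟙`, `ν_i` retracts
`ι_i`; and any compatible family of retractions `ν'` satisfies
`ι_j ≫ ν'_i = ι_j ≫ μ_{jk} ≫ ν'_k ≫ ν_{ik} = τ i j`, which gives uniqueness.
-/

open CategoryTheory

namespace SplitDirectSystem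

variable {I : Type*} [Preorder I] {A : Type*} [Category A] {M : I → A}
  {μ : ∀ i j : I, i ≤ j → (M i ⟶ M j)} {ν : ∀ i j : I, i ≤ j → (M j ⟶ M i)}

theorem ν_eq_μ_comp_ν (hsplit : ∀ (i j : I) (h : i ≤ j), μ i j h ≫ ν i j h = 𝟙 (M i))
    (hνtrans : ∀ (i j k : I) (hij : i ≤ j) (hjk : j ≤ k),
      ν j k hjk ≫ ν i j hij = ν i k (hij.trans hjk))
    {i k l : I} (hik : i ≤ k) (hkl : k ≤ l) :
    ν i k hik = μ k l hkl ≫ ν i l (hik.trans hkl) := by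
  rw [← hνtrans i k l hik hkl, ← Category.assoc, hsplit, Category.id_comp]

theorem μ_comp_ν_eq_of_le (hsplit : ∀ (i j : I) (h : i ≤ j), μ i j h ≫ ν i j h = 𝟙 (M i))
    (hμtrans : ∀ (i j k : I) (hij : i ≤ j) (hjk : j ≤ k),
      μ i j hij ≫ μ j k hjk = μ i k (hij.trans hjk))
    (hνtrans : ∀ (i j k : I) (hij : i ≤ j) (hjk : j ≤ k),
      ν j k hjk ≫ ν i j hij = ν i k (hij.trans hjk))
    {i j k l : I} (hik : i ≤ k) (hjk : j ≤ k) (hkl : k ≤ l) :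
    μ j k hjk ≫ ν i k hik = μ j l (hjk.trans hkl) ≫ ν i l (hik.trans hkl) := by
  rw [ν_eq_μ_comp_ν hsplit hνtrans hik hkl, ← Category.assoc, hμtrans]

theorem exists_transfer (hdir : ∀ i j : I, ∃ k, i ≤ k ∧ j ≤ k)
    (hsplit : ∀ (i j : I) (h : i ≤ j), μ i j h ≫ ν i j h = 𝟙 (M i))
    (hμtrans : ∀ (i j k : I) (hij : i ≤ j) (hjk : j ≤ k),
      μ i j hij ≫ μ j k hjk = μ i k (hij.trans hjk))
    (hνtrans : ∀ (i j k : I) (hij : i ≤ j) (hjk : j ≤ k),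
      ν j k hjk ≫ ν i j hij = ν i k (hij.trans hjk)) :
    ∃ τ : ∀ i j : I, M j ⟶ M i,
      ∀ (i j m : I) (him : i ≤ m) (hjm : j ≤ m), τ i j = μ j m hjm ≫ ν i m him := by
  choose k hik hjk using fun i j => hdir i j
  refine ⟨fun i j => μ j (k i j) (hjk i j) ≫ ν i (k i j) (hik i j), fun i j m him hjm => ?_⟩
  obtain ⟨l, hkl, hml⟩ := hdir (k i j) m
  exact (μ_comp_ν_eq_of_le hsplit hμtrans hνtrans (hik i j) (hjk i j) hkl).trans
    (μ_comp_ν_eq_of_le hsplit hμtrans hνtrans him hjm hml).symm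

variable {τ : ∀ i j : I, M j ⟶ M i}

theorem transfer_self (hsplit : ∀ (i j : I) (h : i ≤ j), μ i j h ≫ ν i j h = 𝟙 (M i))
    (hτ : ∀ (i j m : I) (him : i ≤ m) (hjm : j ≤ m), τ i j = μ j m hjm ≫ ν i m him) (i : I) :
    τ i i = 𝟙 (M i) := by
  rw [hτ i i i le_rfl le_rfl, hsplit]

theorem μ_comp_transfer (hdir : ∀ i j : I, ∃ k, i ≤ k ∧ j ≤ k)
    (hμtrans : ∀ (i j k : I) (hij : i ≤ j) (hjk : j ≤ k),
      μ i j hij ≫ μ j k hjk = μ i k (hij.trans hjk))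
    (hτ : ∀ (i j m : I) (him : i ≤ m) (hjm : j ≤ m), τ i j = μ j m hjm ≫ ν i m him)
    (i : I) {j j' : I} (h : j ≤ j') :
    μ j j' h ≫ τ i j' = τ i j := by
  obtain ⟨m, him, hj'm⟩ := hdir i j'
  rw [hτ i j' m him hj'm, ← Category.assoc, hμtrans, hτ i j m him]

theorem transfer_comp_ν (hdir : ∀ i j : I, ∃ k, i ≤ k ∧ j ≤ k)
    (hνtrans : ∀ (i j k : I) (hij : i ≤ j) (hjk : j ≤ k),
      ν j k hjk ≫ ν i j hij = ν i k (hij.trans hjk))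
    (hτ : ∀ (i j m : I) (him : i ≤ m) (hjm : j ≤ m), τ i j = μ j m hjm ≫ ν i m him)
    {i j : I} (h : i ≤ j) (l : I) :
    τ j l ≫ ν i j h = τ i l := by
  obtain ⟨m, hjm, hlm⟩ := hdir j l
  rw [hτ j l m hjm hlm, Category.assoc, hνtrans, hτ i l m (h.trans hjm) hlm]

theorem comp_eq_transfer_of_retractions (hdir : ∀ i j : I, ∃ k, i ≤ k ∧ j ≤ k)
    (hτ : ∀ (i j m : I) (him : i ≤ m) (hjm : j ≤ m), τ i j = μ j m hjm ≫ ν i m him)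
    {Mc : A} {ι : ∀ i : I, M i ⟶ Mc} (hcocone : ∀ (i j : I) (h : i ≤ j), μ i j h ≫ ι j = ι i)
    {ν' : ∀ i : I, Mc ⟶ M i} (hret : ∀ i : I, ι i ≫ ν' i = 𝟙 (M i))
    (hcompat : ∀ (i j : I) (h : i ≤ j), ν' i = ν' j ≫ ν i j h) (i l : I) :
    ι l ≫ ν' i = τ i l := by
  obtain ⟨m, him, hlm⟩ := hdir i l
  rw [hcompat i m him, ← hcocone l m hlm, Category.assoc, ← Category.assoc (ι m), hret,
    Category.id_comp, hτ i l m him hlm]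

end SplitDirectSystem

theorem split_direct_system_colimit_retractions_general
    {I : Type*} [PartialOrder I] (hdir : ∀ i j : I, ∃ k, i ≤ k ∧ j ≤ k)
    {A : Type*} [Category A]
    (M : I → A)
    (μ : ∀ i j : I, i ≤ j → (M i ⟶ M j))
    (ν : ∀ i j : I, i ≤ j → (M j ⟶ M i))
    (hsplit : ∀ (i j : I) (h : i ≤ j), μ i j h ≫ ν i j h = 𝟙 (M i))
    (hμtrans : ∀ (i j k : I) (hij : i ≤ j) (hjk : j ≤ k),
      μ i j hij ≫ μ j k hjk = μ i k (hij.trans hjk))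
    (hνtrans : ∀ (i j k : I) (hij : i ≤ j) (hjk : j ≤ k),
      ν j k hjk ≫ ν i j hij = ν i k (hij.trans hjk))
    -- the colimit cocone (M∞, ι)
    (Mc : A) (ι : ∀ i : I, M i ⟶ Mc)
    (hcocone : ∀ (i j : I) (h : i ≤ j), μ i j h ≫ ι j = ι i)
    (huniv : ∀ (X : A) (f : ∀ i : I, M i ⟶ X),
      (∀ (i j : I) (h : i ≤ j), μ i j h ≫ f j = f i) →
      ∃! g : Mc ⟶ X, ∀ i : I, ι i ≫ g = f i) :
    ∃! νc : ∀ i : I, Mc ⟶ M i,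
      (∀ i : I, ι i ≫ νc i = 𝟙 (M i)) ∧
      (∀ (i j : I) (h : i ≤ j), νc i = νc j ≫ ν i j h) := by
  obtain ⟨τ, hτ⟩ := SplitDirectSystem.exists_transfer hdir hsplit hμtrans hνtrans
  choose νc hνc hνc_unique using fun i =>
    huniv (M i) (τ i) fun _ _ => SplitDirectSystem.μ_comp_transfer hdir hμtrans hτ i
  refine ⟨νc, ⟨fun i => ?_, fun i j h => ?_⟩, fun ν' ⟨hret, hcompat⟩ => funext fun i => ?_⟩
  · rw [hνc, SplitDirectSystem.transfer_self hsplit hτ]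
  · refine (hνc_unique i _ fun l => ?_).symm
    rw [← Category.assoc, hνc, SplitDirectSystem.transfer_comp_ν hdir hνtrans hτ]
  · exact hνc_unique i _
      (SplitDirectSystem.comp_eq_transfer_of_retractions hdir hτ hcocone hret hcompat i)

/-- If `(M_i, μ_{ji}, ν_{ij})` is a split direct system in a category `𝓐`
over a directed poset `I` and the colimit cocone `(M, μ)` of the underlying direct system
exists, then there exist unique morphisms `ν_i : M ⟶ M_i` with `ν_i ∘ μ_i = id` and
`ν_i = ν_{ij} ∘ ν_j` for all `i ≤ j`. -/
theorem split_direct_system_colimit_retractions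
    {I : Type*} [PartialOrder I] (hdir : ∀ i j : I, ∃ k, i ≤ k ∧ j ≤ k)
    {A : Type*} [Category A]
    (M : I → A)
    (μ : ∀ i j : I, i ≤ j → (M i ⟶ M j))
    (ν : ∀ i j : I, i ≤ j → (M j ⟶ M i))
    (hsplit : ∀ (i j : I) (h : i ≤ j), μ i j h ≫ ν i j h = 𝟙 (M i))
    (hμrefl : ∀ i : I, μ i i le_rfl = 𝟙 (M i))
    (hνrefl : ∀ i : I, ν i i le_rfl = 𝟙 (M i))
    (hμtrans : ∀ (i j k : I) (hij : i ≤ j) (hjk : j ≤ k),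
      μ i j hij ≫ μ j k hjk = μ i k (hij.trans hjk))
    (hνtrans : ∀ (i j k : I) (hij : i ≤ j) (hjk : j ≤ k),
      ν j k hjk ≫ ν i j hij = ν i k (hij.trans hjk))
    -- the colimit cocone (M∞, ι)
    (Mc : A) (ι : ∀ i : I, M i ⟶ Mc)
    (hcocone : ∀ (i j : I) (h : i ≤ j), μ i j h ≫ ι j = ι i)
    (huniv : ∀ (X : A) (f : ∀ i : I, M i ⟶ X),
      (∀ (i j : I) (h : i ≤ j), μ i j h ≫ f j = f i) →
      ∃! g : Mc ⟶ X, ∀ i : I, ι i ≫ g = f i) :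
    ∃! νc : ∀ i : I, Mc ⟶ M i,
      (∀ i : I, ι i ≫ νc i = 𝟙 (M i)) ∧
      (∀ (i j : I) (h : i ≤ j), νc i = νc j ≫ ν i j h) :=
  split_direct_system_colimit_retractions_general hdir M μ ν hsplit hμtrans hνtrans Mc ι hcocone
    huniv
end

section
/- Let A be a unital ring, (I, ≤) a directed partially ordered set, P a right A-module, and for each i ∈ I let P_i be a right A-module with right A-linear maps σ_i : P_i → P and τ_i : P → P_i such that τ_i ∘ σ_i = id_{P_i}; for i ≤ j let σ_{ji} : P_i → P_j and τ_{ij} : P_j → P_i be right A-linear with τ_{ij} ∘ σ_{ji} = id_{P_i}, σ_i = σ_j ∘ σ_{ji} and τ_i = τ_{ij} ∘ τ_j. Define P† = { φ ∈ Hom_A(P, A) : ∃ i ∈ I, φ = φ ∘ σ_i ∘ τ_i }, a left A-submodule of Hom_A(P, A), and for each i define τ_i* : Hom_A(P_i, A) → P†, τ_i*(φ_i) = φ_i ∘ τ_i. Then (P†, τ*) is a colimit cocone of the direct system (Hom_A(P_i, A), τ_{ij}*) of left A-modules, where τ_{ij}*(φ_i) = φ_i ∘ τ_{ij}: that is, τ_j*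 ∘ τ_{ij}* = τ_i* for all i ≤ j, and for every family of maps m_i : Hom_A(P_i, A) → M into an abelian group M with m_j ∘ τ_{ij}* = m_i for all i ≤ j, there exists a unique map f : P† → M with f ∘ τ_i* = m_i for all i ∈ I. -/
/-!
Since `τ_i ∘ σ_i = id`, a form `φ` satisfies `φ = φ ∘ σ_i ∘ τ_i` exactly when it factors through
`τ_i`, so `P†` is the union of the images of the maps `τ_i*`. These images increase with `i`,
hence form a directed union of submodules, and each `τ_i*` is injective because `τ_i` is
surjective. A cocone of injective maps whose images exhaust the target along a directed index set
is a colimit cocone: an element of `P†` is sent to `m_i φ_i` for any preimage `φ_i`, and two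
preimages become equal after pushing both to a common upper index.
-/

open Function LinearMap

theorem existsUnique_lift_of_injective_cocone {I : Type*} [Preorder I] [IsDirectedOrder I]
    {X : I → Type*} {Y M : Type*} {g : ∀ i j, i ≤ j → X i → X j} {f : ∀ i, X i → Y}
    (hf : ∀ i, Injective (f i)) (hfg : ∀ i j h x, f j (g i j h x) = f i x)
    {S : Set Y} (hS : ∀ y ∈ S, ∃ i x, f i x = y)
    {m : ∀ i, X i → M} (hm : ∀ i j h x, m j (g i j h x) = m i x) :
    ∃! F : S → M, ∀ i x (hx : f i x ∈ S), F ⟨f i x, hx⟩ = m i x := by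
  have m_eq_of_f_eq : ∀ i j x x', f i x = f j x' → m i x = m j x' := by
    intro i j x x' hxx'
    obtain ⟨k, hik, hjk⟩ := exists_ge_ge i j
    have hk : g i k hik x = g j k hjk x' := hf k (by rw [hfg, hfg, hxx'])
    rw [← hm i k hik, ← hm j k hjk, hk]
  refine ⟨fun y => m _ (hS y y.2).choose_spec.choose, ?_, ?_⟩
  · intro i x hx
    exact m_eq_of_f_eq _ _ _ _ (hS _ hx).choose_spec.choose_spec
  · intro F hF
    funext ⟨y, hy⟩
    obtain ⟨i, x, rfl⟩ := hS y hy
    exact (hF i x hy).trans (m_eq_of_f_eq _ _ _ _ (hS _ hy).choose_spec.choose_spec).symm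

section Dual

variable {R S : Type*} [Semiring R] [Semiring S] {N : Type*} [AddCommMonoid N] [Module R N]
  [Module S N] [SMulCommClass R S N]

theorem LinearMap.eq_comp_comp_iff_mem_range_lcomp {M M₂ : Type*} [AddCommMonoid M]
    [Module R M] [AddCommMonoid M₂] [Module R M₂] {t : M →ₗ[R] M₂} {s : M₂ →ₗ[R] M}
    (hts : ∀ p, t (s p) = p) (φ : M →ₗ[R] N) :
    φ = (φ ∘ₗ s) ∘ₗ t ↔ φ ∈ range (lcomp S N t) := by
  constructor
  · intro hφ
    exact ⟨φ ∘ₗ s, hφ.symm⟩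
  · rintro ⟨ψ, rfl⟩
    ext p
    simp [hts]

variable {I P : Type*} [Preorder I] [AddCommMonoid P] [Module R P]
  {Pi : I → Type*} [∀ i, AddCommMonoid (Pi i)] [∀ i, Module R (Pi i)]
  {τc : ∀ i, P →ₗ[R] Pi i} {τ : ∀ i j, i ≤ j → Pi j →ₗ[R] Pi i}

theorem comp_comp_eq_comp_of_comp_eq (hτc : ∀ i j h p, τ i j h (τc j p) = τc i p)
    {i j : I} (h : i ≤ j) (ψ : Pi i →ₗ[R] N) : (ψ ∘ₗ τ i j h) ∘ₗ τc j = ψ ∘ₗ τc i := by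
  ext p
  simp [hτc]

theorem monotone_range_lcomp (hτc : ∀ i j h p, τ i j h (τc j p) = τc i p) :
    Monotone fun i => range (lcomp S N (τc i)) := by
  rintro i j h _ ⟨ψ, rfl⟩
  exact ⟨ψ ∘ₗ τ i j h, comp_comp_eq_comp_of_comp_eq hτc h ψ⟩

end Dual

theorem dual_colimit_is_Pdagger_general
    {A : Type*} [Ring A] {I : Type*} [PartialOrder I] [Nonempty I]
    (hdir : ∀ i j : I, ∃ k : I, i ≤ k ∧ j ≤ k)
    (P : Type*) [AddCommGroup P] [Module Aᵐᵒᵖ P]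
    (Pi : I → Type*) [∀ i, AddCommGroup (Pi i)] [∀ i, Module Aᵐᵒᵖ (Pi i)]
    (σc : ∀ i : I, Pi i →ₗ[Aᵐᵒᵖ] P) (τc : ∀ i : I, P →ₗ[Aᵐᵒᵖ] Pi i)
    (hsplitc : ∀ (i : I) (p : Pi i), τc i (σc i p) = p)
    (τ : ∀ i j : I, i ≤ j → (Pi j →ₗ[Aᵐᵒᵖ] Pi i))
    (hτc : ∀ (i j : I) (h : i ≤ j) (p : P), τ i j h (τc j p) = τc i p) :
    let Pdag : Set (P →ₗ[Aᵐᵒᵖ] A) :=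
      {φ : P →ₗ[Aᵐᵒᵖ] A | ∃ i : I, φ = (φ.comp (σc i)).comp (τc i)}
    -- P† is a left A-submodule of Hom_A(P, A)
    ((0 : P →ₗ[Aᵐᵒᵖ] A) ∈ Pdag) ∧
    (∀ φ ∈ Pdag, ∀ ψ ∈ Pdag, φ + ψ ∈ Pdag) ∧
    (∀ (a : A), ∀ φ ∈ Pdag, a • φ ∈ Pdag) ∧
    -- τ_i* lands in P†
    (∀ (i : I) (φi : Pi i →ₗ[Aᵐᵒᵖ] A), φi.comp (τc i) ∈ Pdag) ∧
    -- cocone condition: τ_j* ∘ τ_{ij}* = τ_i*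
    (∀ (i j : I) (h : i ≤ j) (φi : Pi i →ₗ[Aᵐᵒᵖ] A),
      (φi.comp (τ i j h)).comp (τc j) = φi.comp (τc i)) ∧
    -- universal property
    (∀ (M : Type*) [AddCommGroup M] (m : ∀ i : I, (Pi i →ₗ[Aᵐᵒᵖ] A) → M),
      (∀ (i j : I) (h : i ≤ j) (φi : Pi i →ₗ[Aᵐᵒᵖ] A),
        m j (φi.comp (τ i j h)) = m i φi) →
      ∃! f : Pdag → M,
        ∀ (i : I) (φi : Pi i →ₗ[Aᵐᵒᵖ] A) (hmem : φi.comp (τc i) ∈ Pdag),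
          f ⟨φi.comp (τc i), hmem⟩ = m i φi) := by
  intro Pdag
  have : IsDirectedOrder I := ⟨hdir⟩
  let D : Submodule A (P →ₗ[Aᵐᵒᵖ] A) := ⨆ i, range (lcomp A A (τc i))
  have hD : ∀ φ, φ ∈ Pdag ↔ ∃ i ψ, ψ ∘ₗ τc i = φ := fun φ =>
    exists_congr fun i => eq_comp_comp_iff_mem_range_lcomp (S := A) (hsplitc i) φ
  have hPdag : ∀ φ, φ ∈ Pdag ↔ φ ∈ D := fun φ => by
    rw [hD, Submodule.mem_iSup_of_directed _ (monotone_range_lcomp hτc).directed_le]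
    rfl
  refine ⟨(hPdag 0).2 D.zero_mem,
    fun φ hφ ψ hψ => (hPdag _).2 (D.add_mem ((hPdag φ).1 hφ) ((hPdag ψ).1 hψ)),
    fun a φ hφ => (hPdag _).2 (D.smul_mem a ((hPdag φ).1 hφ)),
    fun i φi => (hD _).2 ⟨i, φi, rfl⟩,
    fun i j h => comp_comp_eq_comp_of_comp_eq hτc h,
    fun M _ m hm => ?_⟩
  exact existsUnique_lift_of_injective_cocone
    (fun i => Surjective.injective_linearMapComp_right fun p => ⟨σc i p, hsplitc i p⟩)
    (fun i j h => comp_comp_eq_comp_of_comp_eq hτc h) (fun φ => (hD φ).1) hm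

/-- With `P` a right `A`-module split over a direct system of right
`A`-modules `P_i` (over a nonempty directed poset `I`), the set
`P† = {φ ∈ Hom_A(P, A) : ∃ i, φ = φ ∘ σ_i ∘ τ_i}` is a left `A`-submodule of
`Hom_A(P, A)`, and `(P†, τ*)`, with `τ_i*(φ_i) = φ_i ∘ τ_i`, is a colimit cocone of the
direct system `(Hom_A(P_i, A), τ_{ij}*)`. -/
theorem dual_colimit_is_Pdagger
    {A : Type*} [Ring A] {I : Type*} [PartialOrder I] [Nonempty I]
    (hdir : ∀ i j : I, ∃ k : I, i ≤ k ∧ j ≤ k)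
    (P : Type*) [AddCommGroup P] [Module Aᵐᵒᵖ P]
    (Pi : I → Type*) [∀ i, AddCommGroup (Pi i)] [∀ i, Module Aᵐᵒᵖ (Pi i)]
    (σc : ∀ i : I, Pi i →ₗ[Aᵐᵒᵖ] P) (τc : ∀ i : I, P →ₗ[Aᵐᵒᵖ] Pi i)
    (hsplitc : ∀ (i : I) (p : Pi i), τc i (σc i p) = p)
    (σ : ∀ i j : I, i ≤ j → (Pi i →ₗ[Aᵐᵒᵖ] Pi j))
    (τ : ∀ i j : I, i ≤ j → (Pi j →ₗ[Aᵐᵒᵖ] Pi i))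
    (hsplit : ∀ (i j : I) (h : i ≤ j) (p : Pi i), τ i j h (σ i j h p) = p)
    (hσc : ∀ (i j : I) (h : i ≤ j) (p : Pi i), σc j (σ i j h p) = σc i p)
    (hτc : ∀ (i j : I) (h : i ≤ j) (p : P), τ i j h (τc j p) = τc i p) :
    let Pdag : Set (P →ₗ[Aᵐᵒᵖ] A) :=
      {φ : P →ₗ[Aᵐᵒᵖ] A | ∃ i : I, φ = (φ.comp (σc i)).comp (τc i)}
    -- P† is a left A-submodule of Hom_A(P, A)
    ((0 : P →ₗ[Aᵐᵒᵖ] A) ∈ Pdag) ∧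
    (∀ φ ∈ Pdag, ∀ ψ ∈ Pdag, φ + ψ ∈ Pdag) ∧
    (∀ (a : A), ∀ φ ∈ Pdag, a • φ ∈ Pdag) ∧
    -- τ_i* lands in P†
    (∀ (i : I) (φi : Pi i →ₗ[Aᵐᵒᵖ] A), φi.comp (τc i) ∈ Pdag) ∧
    -- cocone condition: τ_j* ∘ τ_{ij}* = τ_i*
    (∀ (i j : I) (h : i ≤ j) (φi : Pi i →ₗ[Aᵐᵒᵖ] A),
      (φi.comp (τ i j h)).comp (τc j) = φi.comp (τc i)) ∧
    -- universal property
    (∀ (M : Type*) [AddCommGroup M] (m : ∀ i : I, (Pi i →ₗ[Aᵐᵒᵖ] A) → M),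
      (∀ (i j : I) (h : i ≤ j) (φi : Pi i →ₗ[Aᵐᵒᵖ] A),
        m j (φi.comp (τ i j h)) = m i φi) →
      ∃! f : Pdag → M,
        ∀ (i : I) (φi : Pi i →ₗ[Aᵐᵒᵖ] A) (hmem : φi.comp (τc i) ∈ Pdag),
          f ⟨φi.comp (τc i), hmem⟩ = m i φi) :=
  dual_colimit_is_Pdagger_general hdir P Pi σc τc hsplitc τ hτc
end

section
/- Let 𝓐 be a preadditive category, (I, ≤) a directed partially ordered set, (M_i, μ_{ji}, ν_{ij}) a split direct system in 𝓐, and M an object with morphisms μ_i : M_i → M and ν_i : M → M_i satisfying ν_i ∘ μ_i = id_{M_i}, μ_i = μ_j ∘ μ_{ji} and ν_i = ν_{ij} ∘ ν_j for i ≤ j. Set e_i = μ_i ∘ ν_i, T = End_𝓐(M), T_i = End_𝓐(M_i), and T† = { t ∈ T : ∃ i, t = e_i ∘ t ∘ e_i }. For i ≤ j define ρ_{ji} : T_i → T_j by ρ_{ji}(t_i) = μ_{ji} ∘ t_i ∘ ν_{ij}, and for each i define ρ_i : T_i → T by ρ_i(t_i) = μ_i ∘ t_i ∘ ν_i. Then: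 (1) each ρ_{ji} and each ρ_i is additive and multiplicative, and ρ_i(t_i) ∈ T† for all t_i ∈ T_i; (2) ρ_j ∘ ρ_{ji} = ρ_i for all i ≤ j; (3) (T†, ρ) is a colimit of the direct system (T_i, ρ_{ji}): for every family of maps m_i : T_i → X into a set X with m_j ∘ ρ_{ji} = m_i for all i ≤ j, there exists a unique map f : T† → X with f ∘ ρ_i = m_i for all i ∈ I. -/
/-!
`T†` is the union of the corners `e_i T e_i`, and `ρ_i` identifies `T_i` with the corner of
index `i`, with inverse `t ↦ ν_i ∘ t ∘ μ_i`. For `i ≤ k` the corner of index `i` lies in the one of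
index `k`, where it corresponds to the image of `ρ_{ki}`. So two elements of the `T_i` with the same
image in `T†` already agree at a common upper bound, which makes `T†` the directed colimit.
-/

open CategoryTheory

namespace CategoryTheory

variable {C : Type*} [Category C]

section Retract

variable {X Y : C} {i : X ⟶ Y} {r : Y ⟶ X}

theorem conj_comp_conj_of_retract (h : i ≫ r = 𝟙 X) (s t : X ⟶ X) :
    (r ≫ s ≫ i) ≫ (r ≫ t ≫ i) = r ≫ (s ≫ t) ≫ i := by
  simp only [Category.assoc, reassoc_of% h]

theorem idem_comp_conj_comp_idem_of_retract (h : i ≫ r = 𝟙 X) (t : X ⟶ X) :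
    (r ≫ i) ≫ (r ≫ t ≫ i) ≫ (r ≫ i) = r ≫ t ≫ i := by
  simp only [Category.assoc, reassoc_of% h]

theorem conj_corner_eq_of_eq_idem_comp_comp_idem {t : Y ⟶ Y}
    (ht : t = (r ≫ i) ≫ t ≫ (r ≫ i)) : r ≫ (i ≫ t ≫ r) ≫ i = t := by
  conv_rhs => rw [ht]
  simp only [Category.assoc]

theorem corner_conj_eq_of_retract_le {Xi Xk : C} {ιi : Xi ⟶ Y} {πi : Y ⟶ Xi} {ιk : Xk ⟶ Y}
    {πk : Y ⟶ Xk} {μ : Xi ⟶ Xk} {ν : Xk ⟶ Xi} (hk : ιk ≫ πk = 𝟙 Xk) (hι : μ ≫ ιk = ιi)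
    (hπ : πk ≫ ν = πi) (t : Xi ⟶ Xi) : ιk ≫ (πi ≫ t ≫ ιi) ≫ πk = ν ≫ t ≫ μ := by
  subst hι hπ
  simp only [Category.assoc, reassoc_of% hk, hk, Category.comp_id]

end Retract

end CategoryTheory

theorem existsUnique_desc_of_jointly_surjective {I : Type*} [LE I] {T : I → Type*}
    (ρ : ∀ i j : I, i ≤ j → T i → T j) {S : Type*} (g : ∀ i, T i → S)
    (hsurj : ∀ s, ∃ i x, g i x = s)
    (hinj : ∀ i j x y, g i x = g j y → ∃ k, ∃ (hik : i ≤ k) (hjk : j ≤ k),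
      ρ i k hik x = ρ j k hjk y)
    {X : Sort*} (m : ∀ i, T i → X) (hm : ∀ i j h x, m j (ρ i j h x) = m i x) :
    ∃! f : S → X, ∀ i x, f (g i x) = m i x := by
  choose idx pre hpre using hsurj
  have hwd : ∀ i x, m (idx (g i x)) (pre (g i x)) = m i x := fun i x => by
    obtain ⟨k, hik, hjk, hk⟩ := hinj _ _ _ _ (hpre (g i x))
    rw [← hm _ k hik, hk, hm]
  refine ⟨fun s => m (idx s) (pre s), hwd, fun f hf => funext fun s => ?_⟩
  rw [← hpre s, hf, hpre]

theorem Tdagger_is_colimit_of_endomorphism_rings_general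
    {I : Type*} [PartialOrder I] (hdir : ∀ i j : I, ∃ k : I, i ≤ k ∧ j ≤ k)
    {A : Type*} [Category A] [Preadditive A]
    (M : I → A)
    (μ : ∀ i j : I, i ≤ j → (M i ⟶ M j))
    (ν : ∀ i j : I, i ≤ j → (M j ⟶ M i))
    (hsplit : ∀ (i j : I) (h : i ≤ j), μ i j h ≫ ν i j h = 𝟙 (M i))
    (Mc : A) (ι : ∀ i : I, M i ⟶ Mc) (π : ∀ i : I, Mc ⟶ M i)
    (hsplitc : ∀ i : I, ι i ≫ π i = 𝟙 (M i))
    (hι : ∀ (i j : I) (h : i ≤ j), μ i j h ≫ ι j = ι i)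
    (hπ : ∀ (i j : I) (h : i ≤ j), π j ≫ ν i j h = π i) :
    let e : I → (Mc ⟶ Mc) := fun i => π i ≫ ι i
    let Tdag : Set (Mc ⟶ Mc) := {t : Mc ⟶ Mc | ∃ i : I, t = e i ≫ t ≫ e i}
    let ρs : ∀ i j : I, i ≤ j → (M i ⟶ M i) → (M j ⟶ M j) :=
      fun i j h t => ν i j h ≫ t ≫ μ i j h
    let ρc : ∀ i : I, (M i ⟶ M i) → (Mc ⟶ Mc) := fun i t => π i ≫ t ≫ ι i
    -- (1) ρ_{ji} and ρ_i additive and multiplicative, ρ_i lands in T†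
    (∀ (i j : I) (h : i ≤ j) (s t : M i ⟶ M i),
      ρs i j h (s + t) = ρs i j h s + ρs i j h t) ∧
    (∀ (i j : I) (h : i ≤ j) (s t : M i ⟶ M i),
      ρs i j h (s ≫ t) = ρs i j h s ≫ ρs i j h t) ∧
    (∀ (i : I) (s t : M i ⟶ M i), ρc i (s + t) = ρc i s + ρc i t) ∧
    (∀ (i : I) (s t : M i ⟶ M i), ρc i (s ≫ t) = ρc i s ≫ ρc i t) ∧
    (∀ (i : I) (t : M i ⟶ M i), ρc i t ∈ Tdag) ∧
    -- (2) ρ_j ∘ ρ_{ji} = ρ_i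
    (∀ (i j : I) (h : i ≤ j) (t : M i ⟶ M i), ρc j (ρs i j h t) = ρc i t) ∧
    -- (3) universal property of the colimit
    (∀ (X : Type*) (m : ∀ i : I, (M i ⟶ M i) → X),
      (∀ (i j : I) (h : i ≤ j) (t : M i ⟶ M i), m j (ρs i j h t) = m i t) →
      ∃! f : Tdag → X,
        ∀ (i : I) (t : M i ⟶ M i) (hmem : ρc i t ∈ Tdag), f ⟨ρc i t, hmem⟩ = m i t) := by
  intro e Tdag ρs ρc
  have hmem : ∀ i t, ρc i t ∈ Tdag := fun i t =>
    ⟨i, (idem_comp_conj_comp_idem_of_retract (hsplitc i) t).symm⟩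
  refine ⟨fun i j h s t => by simp only [ρs, Preadditive.add_comp, Preadditive.comp_add],
    fun i j h s t => (conj_comp_conj_of_retract (hsplit i j h) s t).symm,
    fun i s t => by simp only [ρc, Preadditive.add_comp, Preadditive.comp_add],
    fun i s t => (conj_comp_conj_of_retract (hsplitc i) s t).symm, hmem,
    fun i j h t => by simp only [ρc, ρs, ← hπ i j h, ← hι i j h, Category.assoc], ?_⟩
  intro X m hm
  obtain ⟨f, hf, huniq⟩ := existsUnique_desc_of_jointly_surjective ρs
    (fun i t => (⟨ρc i t, hmem i t⟩ : Tdag))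
    (fun ⟨t, i, ht⟩ => ⟨i, ι i ≫ t ≫ π i,
      Subtype.ext (conj_corner_eq_of_eq_idem_comp_comp_idem ht)⟩)
    (fun i j x y hxy => by
      obtain ⟨k, hik, hjk⟩ := hdir i j
      refine ⟨k, hik, hjk, ?_⟩
      calc ρs i k hik x = ι k ≫ ρc i x ≫ π k :=
            (corner_conj_eq_of_retract_le (hsplitc k) (hι i k hik) (hπ i k hik) x).symm
        _ = ι k ≫ ρc j y ≫ π k := congrArg (fun t => ι k ≫ t ≫ π k) (congrArg Subtype.val hxy)
        _ = ρs j k hjk y := corner_conj_eq_of_retract_le (hsplitc k) (hι j k hjk) (hπ j k hjk) y)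
    m hm
  exact ⟨f, fun i t _ => hf i t, fun f' hf' => huniq f' fun i t => hf' i t _⟩

/-- In a preadditive category, given a split direct system
`(M_i, μ_{ji}, ν_{ij})` over a directed poset with object `M`, morphisms `μ_i, ν_i`,
idempotents `e_i = μ_i ∘ ν_i`, endomorphism rings `T_i = End(M_i)`, `T = End(M)`,
`T† = {t : ∃ i, t = e_i ∘ t ∘ e_i}`, and maps `ρ_{ji}(t_i) = μ_{ji} ∘ t_i ∘ ν_{ij}`,
`ρ_i(t_i) = μ_i ∘ t_i ∘ ν_i`: (1) each `ρ_{ji}` and `ρ_i` is additive and multiplicative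
and `ρ_i` lands in `T†`; (2) `ρ_j ∘ ρ_{ji} = ρ_i`; (3) `(T†, ρ)` is a colimit of the
direct system `(T_i, ρ_{ji})`. -/
theorem Tdagger_is_colimit_of_endomorphism_rings
    {I : Type*} [PartialOrder I] (hdir : ∀ i j : I, ∃ k : I, i ≤ k ∧ j ≤ k)
    {A : Type*} [Category A] [Preadditive A]
    (M : I → A)
    (μ : ∀ i j : I, i ≤ j → (M i ⟶ M j))
    (ν : ∀ i j : I, i ≤ j → (M j ⟶ M i))
    (hsplit : ∀ (i j : I) (h : i ≤ j), μ i j h ≫ ν i j h = 𝟙 (M i))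
    (hμrefl : ∀ i : I, μ i i le_rfl = 𝟙 (M i))
    (hνrefl : ∀ i : I, ν i i le_rfl = 𝟙 (M i))
    (hμtrans : ∀ (i j k : I) (hij : i ≤ j) (hjk : j ≤ k),
      μ i j hij ≫ μ j k hjk = μ i k (hij.trans hjk))
    (hνtrans : ∀ (i j k : I) (hij : i ≤ j) (hjk : j ≤ k),
      ν j k hjk ≫ ν i j hij = ν i k (hij.trans hjk))
    (Mc : A) (ι : ∀ i : I, M i ⟶ Mc) (π : ∀ i : I, Mc ⟶ M i)
    (hsplitc : ∀ i : I, ι i ≫ π i = 𝟙 (M i))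
    (hι : ∀ (i j : I) (h : i ≤ j), μ i j h ≫ ι j = ι i)
    (hπ : ∀ (i j : I) (h : i ≤ j), π j ≫ ν i j h = π i) :
    let e : I → (Mc ⟶ Mc) := fun i => π i ≫ ι i
    let Tdag : Set (Mc ⟶ Mc) := {t : Mc ⟶ Mc | ∃ i : I, t = e i ≫ t ≫ e i}
    let ρs : ∀ i j : I, i ≤ j → (M i ⟶ M i) → (M j ⟶ M j) :=
      fun i j h t => ν i j h ≫ t ≫ μ i j h
    let ρc : ∀ i : I, (M i ⟶ M i) → (Mc ⟶ Mc) := fun i t => π i ≫ t ≫ ι i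
    -- (1) ρ_{ji} and ρ_i additive and multiplicative, ρ_i lands in T†
    (∀ (i j : I) (h : i ≤ j) (s t : M i ⟶ M i),
      ρs i j h (s + t) = ρs i j h s + ρs i j h t) ∧
    (∀ (i j : I) (h : i ≤ j) (s t : M i ⟶ M i),
      ρs i j h (s ≫ t) = ρs i j h s ≫ ρs i j h t) ∧
    (∀ (i : I) (s t : M i ⟶ M i), ρc i (s + t) = ρc i s + ρc i t) ∧
    (∀ (i : I) (s t : M i ⟶ M i), ρc i (s ≫ t) = ρc i s ≫ ρc i t) ∧
    (∀ (i : I) (t : M i ⟶ M i), ρc i t ∈ Tdag) ∧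
    -- (2) ρ_j ∘ ρ_{ji} = ρ_i
    (∀ (i j : I) (h : i ≤ j) (t : M i ⟶ M i), ρc j (ρs i j h t) = ρc i t) ∧
    -- (3) universal property of the colimit
    (∀ (X : Type*) (m : ∀ i : I, (M i ⟶ M i) → X),
      (∀ (i j : I) (h : i ≤ j) (t : M i ⟶ M i), m j (ρs i j h t) = m i t) →
      ∃! f : Tdag → X,
        ∀ (i : I) (t : M i ⟶ M i) (hmem : ρc i t ∈ Tdag), f ⟨ρc i t, hmem⟩ = m i t) :=
  Tdagger_is_colimit_of_endomorphism_rings_general hdir M μ ν hsplit Mc ι π hsplitc hι hπ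
end
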